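/- arXiv:1706.05151 — 2 statements merged into one kernel-verified Lean document; each statement's English description precedes it below -/
import Mathlib

section
/- Let G=(V,E) be a finite simple undirected graph and let ≺_D be a degree-based linear order on V (u ≺_D v whenever d_u < d_v). For a linear order ≺ on V, write C(≺) = ∑_{v∈V} d_v · |{u ∈ N(v) : v ≺ u}|. Then for every linear order ≺_K on V, C(≺_K) ≥ C(≺_D); that is, the degree-based order minimizes ∑_v d_v · d̂_v over all linear orders on V. -/
/-- The effective degree of `v`: the number of neighbors `u` of `v` with `v ≺ u`. -/
noncomputable def effDeg {V : Type*} (G : SimpleGraph V) (lt : V → V → Prop) (v : V) : ℕ :=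
  {u : V | G.Adj v u ∧ lt v u}.ncard

section Aux

variable {V : Type*} [Fintype V] [DecidableEq V] (G : SimpleGraph V) [DecidableRel G.Adj]

private def adjPairs : Finset (V × V) :=
  Finset.univ.filter (fun p : V × V => G.Adj p.1 p.2)

private lemma cost_eq (lt : V → V → Prop) [DecidableRel lt] :
    ∑ v : V, G.degree v * effDeg G lt v
      = ∑ p ∈ adjPairs G, (if lt p.1 p.2 then G.degree p.1 else 0) := by
  rw [adjPairs, Finset.sum_filter, ← Finset.univ_product_univ, Finset.sum_product]
  refine Finset.sum_congr rfl fun v _ => ?_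
  have he : effDeg G lt v = (Finset.univ.filter (fun u => G.Adj v u ∧ lt v u)).card := by
    rw [effDeg, show {u | G.Adj v u ∧ lt v u}
        = ↑(Finset.univ.filter (fun u => G.Adj v u ∧ lt v u)) by ext u; simp,
      Set.ncard_coe_finset]
  rw [he]
  rw [show (∑ u : V, if G.Adj v u then (if lt v u then G.degree v else 0) else 0)
      = ∑ u : V, (if G.Adj v u ∧ lt v u then G.degree v else 0) by
    refine Finset.sum_congr rfl fun u _ => ?_
    by_cases h1 : G.Adj v u <;> by_cases h2 : lt v u <;> simp [h1, h2]]
  rw [← Finset.sum_filter, Finset.sum_const, smul_eq_mul, mul_comm]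

private lemma sum_swap (f : V → V → ℕ) :
    ∑ p ∈ adjPairs G, f p.1 p.2 = ∑ p ∈ adjPairs G, f p.2 p.1 := by
  refine Finset.sum_nbij' (fun p => (p.2, p.1)) (fun p => (p.2, p.1)) ?_ ?_ ?_ ?_ ?_ <;>
    simp [adjPairs, G.adj_comm]

private lemma two_mul_cost (lt : V → V → Prop) [DecidableRel lt]
    (trich : ∀ v u : V, v ≠ u → (lt v u ∨ lt u v))
    (asym : ∀ v u : V, lt v u → ¬ lt u v) :
    2 * (∑ v : V, G.degree v * effDeg G lt v)
      = ∑ p ∈ adjPairs G, (if lt p.1 p.2 then G.degree p.1 else G.degree p.2) := by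
  rw [two_mul, cost_eq G lt]
  nth_rewrite 2 [sum_swap G (fun a b => if lt a b then G.degree a else 0)]
  rw [← Finset.sum_add_distrib]
  refine Finset.sum_congr rfl fun p hp => ?_
  have hadj : G.Adj p.1 p.2 := by simpa [adjPairs] using hp
  have hne : p.1 ≠ p.2 := G.ne_of_adj hadj
  by_cases h : lt p.1 p.2
  · simp [h, asym _ _ h]
  · have h2 : lt p.2 p.1 := (trich _ _ hne).resolve_left h
    simp [h, h2]

end Aux

/-- Let `G` be a finite simple undirected graph and `≺_D` a degree-based linear
order on the vertices (`u ≺_D v` whenever `d_u < d_v`). Writing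
`C(≺) = ∑_v d_v · |{u ∈ N(v) : v ≺ u}|`, for every linear order `≺_K` we have
`C(≺_K) ≥ C(≺_D)`: the degree-based order minimizes `∑_v d_v · d̂_v` over all linear orders. -/
theorem degree_order_minimizes_cost {V : Type*} [Fintype V] [DecidableEq V]
    (G : SimpleGraph V) [DecidableRel G.Adj] (D : LinearOrder V)
    (hD : ∀ u v : V, G.degree u < G.degree v → D.lt u v) :
    ∀ K : LinearOrder V,
      ∑ v : V, G.degree v * effDeg G D.lt v ≤ ∑ v : V, G.degree v * effDeg G K.lt v := by
  intro K
  haveI : DecidableRel D.lt := D.toDecidableLT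
  haveI : DecidableRel K.lt := K.toDecidableLT
  have trichD : ∀ v u : V, v ≠ u → (D.lt v u ∨ D.lt u v) := fun v u h =>
    (@lt_trichotomy _ D v u).imp_right (fun h' => h'.resolve_left h)
  have asymD : ∀ v u : V, D.lt v u → ¬ D.lt u v := fun v u h h' =>
    (D.lt_iff_le_not_ge v u).mp h |>.2 ((D.lt_iff_le_not_ge u v).mp h').1
  have trichK : ∀ v u : V, v ≠ u → (K.lt v u ∨ K.lt u v) := fun v u h =>
    (@lt_trichotomy _ K v u).imp_right (fun h' => h'.resolve_left h)
  have asymK : ∀ v u : V, K.lt v u → ¬ K.lt u v := fun v u h h' =>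
    (K.lt_iff_le_not_ge v u).mp h |>.2 ((K.lt_iff_le_not_ge u v).mp h').1
  have hmin : ∀ v u : V, D.lt v u → G.degree v ≤ G.degree u := fun v u h =>
    le_of_not_gt fun hd => asymD v u h (hD u v hd)
  have key : 2 * (∑ v : V, G.degree v * effDeg G D.lt v)
      ≤ 2 * (∑ v : V, G.degree v * effDeg G K.lt v) := by
    rw [two_mul_cost G D.lt trichD asymD, two_mul_cost G K.lt trichK asymK]
    refine Finset.sum_le_sum fun p hp => ?_
    have hadj : G.Adj p.1 p.2 := by simpa [adjPairs] using hp
    have hne : p.1 ≠ p.2 := G.ne_of_adj hadj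
    by_cases hd : D.lt p.1 p.2 <;> by_cases hk : K.lt p.1 p.2 <;> simp only [hd, hk, if_pos, if_neg, if_true, if_false]
    · exact le_rfl
    · exact hmin _ _ hd
    · exact hmin _ _ ((trichD _ _ hne).resolve_left hd)
    · exact le_rfl
  omega
end

section
/- Let G=(V,E) be a finite simple undirected graph and let 0 < q ≤ 1. Form a random subgraph G' by retaining each edge of G independently with probability q, and let T(G') be the number of surviving triangles. Let T(G) be the number of triangles of G and let k be the number of unordered pairs of distinct triangles of G that share a common edge. Then the variance of the estimator (1/q³)·T(G') equals (1/q³ − 1)·T(G) + 2k·(1/q − 1). -/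
open MeasureTheory Finset

attribute [local instance] Classical.propDecidable

/-- The product Bernoulli measure on edge-retention assignments: each edge of `G` is retained
(`true`) independently with probability `q`. -/
noncomputable def edgeRetentionMeasure {V : Type*} [Fintype V] [DecidableEq V]
    (G : SimpleGraph V) [DecidableRel G.Adj] (q : ENNReal) (hq : q ≤ 1) :
    Measure (↥G.edgeFinset → Bool) :=
  Measure.pi fun _ => (PMF.bernoulli q.toNNReal
    (by simpa using ENNReal.toNNReal_mono ENNReal.one_ne_top hq)).toMeasure

/-- The triangle `t` survives under the retention assignment `σ`: every edge of `G` whose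
endpoints both lie in `t` (i.e. each of the three edges of the triangle) is retained. -/
def Survives {V : Type*} [Fintype V] [DecidableEq V]
    (G : SimpleGraph V) [DecidableRel G.Adj] (σ : ↥G.edgeFinset → Bool)
    (t : Finset V) : Prop :=
  ∀ e : ↥G.edgeFinset, (∀ x ∈ (e : Sym2 V), x ∈ t) → σ e = true

/-- The number of triangles of `G` surviving under `σ`. -/
noncomputable def survivingTriangles {V : Type*} [Fintype V] [DecidableEq V]
    (G : SimpleGraph V) [DecidableRel G.Adj] (σ : ↥G.edgeFinset → Bool) : ℕ :=
  {t : Finset V | G.IsNClique 3 t ∧ Survives G σ t}.ncard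

/-- The set of edges of a triangle `t`: the non-diagonal pairs with both endpoints in `t`. -/
def triEdgeSet {V : Type*} [DecidableEq V] (t : Finset V) : Set (Sym2 V) :=
  {e : Sym2 V | ¬ e.IsDiag ∧ ∀ x ∈ e, x ∈ t}

section Aux

variable {V : Type*} [Fintype V] [DecidableEq V] (G : SimpleGraph V) [DecidableRel G.Adj]

instance (q : ENNReal) (hq : q ≤ 1) :
    IsProbabilityMeasure (edgeRetentionMeasure G q hq) := by
  unfold edgeRetentionMeasure; infer_instance

lemma meas_singleton (q : ℝ) (hq0 : 0 ≤ q) (hq1 : q ≤ 1) (σ : ↥G.edgeFinset → Bool) :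
    ((edgeRetentionMeasure G (ENNReal.ofReal q) (ENNReal.ofReal_le_one.mpr hq1)) {σ}).toReal
      = ∏ e : ↥G.edgeFinset, (if σ e then q else 1 - q) := by
  have h1 : ({σ} : Set (↥G.edgeFinset → Bool)) = Set.univ.pi (fun e => {σ e}) := by
    ext τ; simp [funext_iff, Set.mem_pi]
  rw [edgeRetentionMeasure, h1, Measure.pi_pi, ENNReal.toReal_prod]
  refine Finset.prod_congr rfl fun e _ => ?_
  rw [PMF.toMeasure_apply_singleton _ _ (measurableSet_singleton _)]; erw [PMF.bernoulli_apply]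
  cases hb : σ e
  · simp [hq0, Real.coe_toNNReal _ hq0, NNReal.coe_sub, hq1]
  · simp [hq0, Real.coe_toNNReal _ hq0]

set_option maxHeartbeats 1000000 in
lemma integral_indicator_pow (q : ℝ) (hq0 : 0 ≤ q) (hq1 : q ≤ 1)
    (S : Finset ↥G.edgeFinset) :
    ∫ σ, (if ∀ e ∈ S, σ e = true then (1:ℝ) else 0)
      ∂(edgeRetentionMeasure G (ENNReal.ofReal q) (ENNReal.ofReal_le_one.mpr hq1))
    = q ^ S.card := by
  rw [integral_fintype Integrable.of_finite]; simp only [Measure.real_def]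
  have key : ∀ σ : ↥G.edgeFinset → Bool,
      ((edgeRetentionMeasure G (ENNReal.ofReal q) (ENNReal.ofReal_le_one.mpr hq1)) {σ}).toReal
        • (if ∀ e ∈ S, σ e = true then (1:ℝ) else 0)
      = ∏ e : ↥G.edgeFinset,
          ((if σ e then q else 1-q) * (if e ∈ S then (if σ e then (1:ℝ) else 0) else 1)) := by
    intro σ
    rw [meas_singleton G q hq0 hq1, smul_eq_mul, Finset.prod_mul_distrib]
    congr 1
    rw [Finset.prod_ite_mem, Finset.univ_inter]; simp [Finset.prod_boole]
  simp_rw [key]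
  have := (Finset.prod_univ_sum (fun _ : ↥G.edgeFinset => (Finset.univ : Finset Bool))
    (fun e b => (if b then q else 1-q) * (if e ∈ S then (if b then (1:ℝ) else 0) else 1)))
  rw [Fintype.piFinset_univ] at this
  rw [← this]
  have h2 : ∀ e : ↥G.edgeFinset,
      (∑ b : Bool, (if b then q else 1-q) * (if e ∈ S then (if b then (1:ℝ) else 0) else 1))
      = if e ∈ S then q else 1 := by
    intro e
    by_cases he : e ∈ S <;> simp [he, Fintype.sum_bool] <;> ring
  simp_rw [h2]
  rw [Finset.prod_ite_mem, Finset.univ_inter, Finset.prod_const]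


/-- the edges of `G` inside `t`, as a finset of subtype edges -/
noncomputable def Et (t : Finset V) : Finset ↥G.edgeFinset :=
  univ.filter (fun e => ∀ x ∈ (e : Sym2 V), x ∈ t)

lemma survives_iff (σ : ↥G.edgeFinset → Bool) (t : Finset V) :
    Survives G σ t ↔ ∀ e ∈ Et G t, σ e = true := by
  simp [Survives, Et]

lemma card_Et (t : Finset V) (ht : G.IsNClique 3 t) : (Et G t).card = 3 := by
  obtain ⟨a, b, c, hab, hac, hbc, rfl⟩ := Finset.card_eq_three.mp ht.card_eq
  have hAab : G.Adj a b := ht.isClique (by simp) (by simp) hab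
  have hAac : G.Adj a c := ht.isClique (by simp) (by simp) hac
  have hAbc : G.Adj b c := ht.isClique (by simp) (by simp) hbc
  have himg : (Et G {a, b, c}).image Subtype.val =
      ({s(a,b), s(a,c), s(b,c)} : Finset (Sym2 V)) := by
    ext e
    simp only [Finset.mem_image, Finset.mem_insert, Finset.mem_singleton]
    constructor
    · rintro ⟨⟨e, he⟩, hmem, rfl⟩
      simp only [Et, Finset.mem_filter] at hmem
      induction e with
      | _ x y =>
        have hnd : x ≠ y := by
          intro h; exact (G.not_isDiag_of_mem_edgeSet
            (SimpleGraph.mem_edgeFinset.mp he)) (by simp [h])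
        have hx := hmem.2 x (by simp)
        have hy := hmem.2 y (by simp)
        simp only [Finset.mem_insert, Finset.mem_singleton] at hx hy
        rcases hx with rfl | rfl | rfl <;> rcases hy with rfl | rfl | rfl <;>
          simp_all [Sym2.eq_iff] <;> tauto
    · intro h
      rcases h with rfl | rfl | rfl
      · exact ⟨⟨s(a,b), SimpleGraph.mem_edgeFinset.mpr hAab⟩, by simp [Et], rfl⟩
      · exact ⟨⟨s(a,c), SimpleGraph.mem_edgeFinset.mpr hAac⟩, by simp [Et], rfl⟩
      · exact ⟨⟨s(b,c), SimpleGraph.mem_edgeFinset.mpr hAbc⟩, by simp [Et], rfl⟩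
  have hcard := congrArg Finset.card himg
  rw [Finset.card_image_of_injective _ Subtype.val_injective] at hcard
  rw [hcard]
  rw [Finset.card_insert_of_notMem (by simp [Sym2.eq_iff]; tauto),
    Finset.card_insert_of_notMem (by simp [Sym2.eq_iff]; tauto), Finset.card_singleton]

lemma sym2_eq_of_card_le_two {r : Finset V} (hr : r.card ≤ 2) (u w : Sym2 V)
    (hu : ¬ u.IsDiag) (hw : ¬ w.IsDiag)
    (hur : ∀ x ∈ u, x ∈ r) (hwr : ∀ x ∈ w, x ∈ r) : u = w := by
  induction u with
  | _ x y =>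
    induction w with
    | _ z v =>
      have hxy : x ≠ y := by simpa [Sym2.mk_isDiag_iff] using hu
      have hzv : z ≠ v := by simpa [Sym2.mk_isDiag_iff] using hw
      have h1 : ({x, y} : Finset V) = r := by
        apply Finset.eq_of_subset_of_card_le
        · intro w hw; simp at hw; rcases hw with rfl | rfl
          · exact hur _ (by simp)
          · exact hur _ (by simp)
        · rwa [Finset.card_pair hxy]
      have h2 : ({z, v} : Finset V) = r := by
        apply Finset.eq_of_subset_of_card_le
        · intro w hw; simp at hw; rcases hw with rfl | rfl
          · exact hwr _ (by simp)
          · exact hwr _ (by simp)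
        · rwa [Finset.card_pair hzv]
      have h3 : ({x, y} : Finset V) = {z, v} := h1.trans h2.symm
      have hz : z ∈ ({x, y} : Finset V) := h3 ▸ (by simp)
      have hv : v ∈ ({x, y} : Finset V) := h3 ▸ (by simp)
      simp only [Finset.mem_insert, Finset.mem_singleton] at hz hv
      rcases hz with rfl | rfl <;> rcases hv with rfl | rfl <;>
        simp_all [Sym2.eq_iff]

lemma card_inter_le_one {t s : Finset V} (ht : G.IsNClique 3 t) (hs : G.IsNClique 3 s)
    (hts : t ≠ s) : (Et G t ∩ Et G s).card ≤ 1 := by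
  have hcard : (t ∩ s).card ≤ 2 := by
    by_contra h
    push_neg at h
    have e1 : t ∩ s = t := Finset.eq_of_subset_of_card_le Finset.inter_subset_left
      (by rw [ht.card_eq]; omega)
    have e2 : t ∩ s = s := Finset.eq_of_subset_of_card_le Finset.inter_subset_right
      (by rw [hs.card_eq]; omega)
    exact hts (e1.symm.trans e2)
  rw [Finset.card_le_one]
  rintro e he f hf
  simp only [Finset.mem_inter, Et, Finset.mem_filter] at he hf
  apply Subtype.ext
  have hed : ¬ (e : Sym2 V).IsDiag := G.not_isDiag_of_mem_edgeSet
    (SimpleGraph.mem_edgeFinset.mp e.2)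
  have hfd : ¬ (f : Sym2 V).IsDiag := G.not_isDiag_of_mem_edgeSet
    (SimpleGraph.mem_edgeFinset.mp f.2)
  exact sym2_eq_of_card_le_two hcard _ _ hed hfd
    (fun x hx => Finset.mem_inter.mpr ⟨he.1.2 x hx, he.2.2 x hx⟩)
    (fun x hx => Finset.mem_inter.mpr ⟨hf.1.2 x hx, hf.2.2 x hx⟩)

lemma card_union_Et {t s : Finset V} (ht : G.IsNClique 3 t) (hs : G.IsNClique 3 s) :
    (Et G t ∪ Et G s).card + (Et G t ∩ Et G s).card = 6 := by
  rw [Finset.card_union_add_card_inter, card_Et G t ht, card_Et G s hs]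

lemma bridge {t s : Finset V} (ht : G.IsNClique 3 t) (hs : G.IsNClique 3 s) :
    (triEdgeSet t ∩ triEdgeSet s).Nonempty ↔ (Et G t ∩ Et G s).Nonempty := by
  constructor
  · rintro ⟨e, ⟨hnd, hsubt⟩, ⟨-, hsubs⟩⟩
    induction e with
    | _ x y =>
      have hxy : x ≠ y := by simpa [Sym2.mk_isDiag_iff] using hnd
      have hadj : G.Adj x y := ht.isClique (hsubt x (by simp)) (hsubt y (by simp)) hxy
      refine ⟨⟨s(x,y), SimpleGraph.mem_edgeFinset.mpr hadj⟩, ?_⟩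
      simp only [Finset.mem_inter, Et, Finset.mem_filter, Finset.mem_univ, true_and]
      exact ⟨hsubt, hsubs⟩
  · rintro ⟨e, he⟩
    simp only [Finset.mem_inter, Et, Finset.mem_filter, Finset.mem_univ, true_and] at he
    exact ⟨(e : Sym2 V),
      ⟨G.not_isDiag_of_mem_edgeSet (SimpleGraph.mem_edgeFinset.mp e.2), he.1⟩,
      ⟨G.not_isDiag_of_mem_edgeSet (SimpleGraph.mem_edgeFinset.mp e.2), he.2⟩⟩

/-- triangles of `G` -/
noncomputable def triFinset : Finset (Finset V) := univ.filter (fun t => G.IsNClique 3 t)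

/-- unordered sharing pairs -/
noncomputable def pairFinset : Finset (Finset (Finset V)) :=
  univ.filter (fun P => P.card = 2 ∧ (∀ t ∈ P, G.IsNClique 3 t) ∧
    ∃ t₁ ∈ P, ∃ t₂ ∈ P, t₁ ≠ t₂ ∧ (triEdgeSet t₁ ∩ triEdgeSet t₂).Nonempty)

lemma ordered_pairs_card :
    ((triFinset G ×ˢ triFinset G).filter
        (fun p => p.1 ≠ p.2 ∧ (Et G p.1 ∩ Et G p.2).Nonempty)).card
      = 2 * (pairFinset G).card := by
  set D := (triFinset G ×ˢ triFinset G).filter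
    (fun p => p.1 ≠ p.2 ∧ (Et G p.1 ∩ Et G p.2).Nonempty) with hD
  have htriD : ∀ p ∈ D, p.1 ∈ triFinset G ∧ p.2 ∈ triFinset G ∧ p.1 ≠ p.2 ∧
      (Et G p.1 ∩ Et G p.2).Nonempty := by
    intro p hp
    simp only [hD, Finset.mem_filter, Finset.mem_product] at hp
    exact ⟨hp.1.1, hp.1.2, hp.2.1, hp.2.2⟩
  have hmaps : ∀ p ∈ D, ({p.1, p.2} : Finset (Finset V)) ∈ pairFinset G := by
    intro p hp
    obtain ⟨h1, h2, hne, hsh⟩ := htriD p hp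
    simp only [triFinset, Finset.mem_filter, Finset.mem_univ, true_and] at h1 h2
    simp only [pairFinset, Finset.mem_filter, Finset.mem_univ, true_and]
    refine ⟨Finset.card_pair hne, ?_, p.1, by simp, p.2, by simp, hne,
      (bridge G h1 h2).mpr hsh⟩
    intro x hx
    rcases Finset.mem_insert.mp hx with rfl | hx
    · exact h1
    · rw [Finset.mem_singleton.mp hx]; exact h2
  rw [Finset.card_eq_sum_card_fiberwise hmaps]
  have hfibcard : ∀ P ∈ pairFinset G,
      (D.filter (fun p => ({p.1, p.2} : Finset (Finset V)) = P)).card = 2 := by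
    intro P hP
    simp only [pairFinset, Finset.mem_filter, Finset.mem_univ, true_and] at hP
    obtain ⟨hcard2, htri, t₁, ht₁, t₂, ht₂, hne, hsh⟩ := hP
    obtain ⟨a, b, hab, rfl⟩ := Finset.card_eq_two.mp hcard2
    -- the sharing pair must be {a,b} in some order
    have hshab : (Et G a ∩ Et G b).Nonempty := by
      have hta : G.IsNClique 3 a := htri a (by simp)
      have htb : G.IsNClique 3 b := htri b (by simp)
      simp only [Finset.mem_insert, Finset.mem_singleton] at ht₁ ht₂
      rcases ht₁ with rfl | rfl <;> rcases ht₂ with rfl | rfl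
      · exact absurd rfl hne
      · exact (bridge G hta htb).mp hsh
      · obtain ⟨e, he⟩ := (bridge G htb hta).mp hsh
        rw [Finset.mem_inter] at he
        exact ⟨e, Finset.mem_inter.mpr ⟨he.2, he.1⟩⟩
      · exact absurd rfl hne
    have hfib : D.filter (fun p => ({p.1, p.2} : Finset (Finset V)) = {a, b})
        = {(a, b), (b, a)} := by
      ext p
      simp only [Finset.mem_filter, Finset.mem_insert, Finset.mem_singleton]
      constructor
      · rintro ⟨hpD, hpP⟩
        obtain ⟨-, -, hne', -⟩ := htriD p hpD
        have h1 : p.1 ∈ ({a, b} : Finset (Finset V)) := hpP ▸ (by simp)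
        have h2 : p.2 ∈ ({a, b} : Finset (Finset V)) := hpP ▸ (by simp)
        simp only [Finset.mem_insert, Finset.mem_singleton] at h1 h2
        rcases h1 with h1 | h1 <;> rcases h2 with h2 | h2
        · exact absurd (h1.trans h2.symm) hne'
        · left; exact Prod.ext h1 h2
        · right; exact Prod.ext h1 h2
        · exact absurd (h1.trans h2.symm) hne'
      · have hta : a ∈ triFinset G := by
          simp only [triFinset, Finset.mem_filter, Finset.mem_univ, true_and]
          exact htri a (by simp)
        have htb : b ∈ triFinset G := by
          simp only [triFinset, Finset.mem_filter, Finset.mem_univ, true_and]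
          exact htri b (by simp)
        rintro (rfl | rfl)
        · refine ⟨?_, rfl⟩
          simp only [hD, Finset.mem_filter, Finset.mem_product]
          exact ⟨⟨hta, htb⟩, hab, hshab⟩
        · refine ⟨?_, by rw [Finset.pair_comm]⟩
          simp only [hD, Finset.mem_filter, Finset.mem_product]
          refine ⟨⟨htb, hta⟩, hab.symm, ?_⟩
          obtain ⟨e, he⟩ := hshab
          rw [Finset.mem_inter] at he
          exact ⟨e, Finset.mem_inter.mpr ⟨he.2, he.1⟩⟩
    rw [hfib]
    rw [Finset.card_insert_of_notMem (by simp [Prod.ext_iff]; exact fun h => absurd h hab),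
      Finset.card_singleton]
  rw [Finset.sum_congr rfl hfibcard, Finset.sum_const, smul_eq_mul, Nat.mul_comm]

lemma surv_sum (σ : ↥G.edgeFinset → Bool) :
    (survivingTriangles G σ : ℝ)
      = ∑ t ∈ triFinset G, (if ∀ e ∈ Et G t, σ e = true then (1:ℝ) else 0) := by
  have hset : {t : Finset V | G.IsNClique 3 t ∧ Survives G σ t}
      = ↑(univ.filter (fun t => G.IsNClique 3 t ∧ Survives G σ t)) := by
    ext t; simp
  rw [survivingTriangles, hset, Set.ncard_coe_finset]
  have h2 : (univ.filter (fun t => G.IsNClique 3 t ∧ Survives G σ t))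
      = (triFinset G).filter (fun t => Survives G σ t) := by
    rw [triFinset, Finset.filter_filter]
  rw [h2]
  rw [Finset.sum_congr rfl (fun t _ => if_congr (survives_iff G σ t) rfl rfl) |>.symm]
  simp [Finset.sum_boole]

variable (q : ℝ)

lemma expectation_T (hq0 : 0 < q) (hq1 : q ≤ 1) :
    ∫ σ, (survivingTriangles G σ : ℝ)
        ∂(edgeRetentionMeasure G (ENNReal.ofReal q) (ENNReal.ofReal_le_one.mpr hq1))
      = ((triFinset G).card : ℝ) * q ^ 3 := by
  simp_rw [surv_sum G]
  rw [integral_finset_sum _ (fun t _ => Integrable.of_finite)]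
  have h : ∀ t ∈ triFinset G,
      ∫ σ, (if ∀ e ∈ Et G t, σ e = true then (1:ℝ) else 0)
        ∂(edgeRetentionMeasure G (ENNReal.ofReal q) (ENNReal.ofReal_le_one.mpr hq1))
      = q ^ 3 := by
    intro t ht
    rw [integral_indicator_pow G q hq0.le hq1, card_Et G t]
    simp only [triFinset, Finset.mem_filter] at ht
    exact ht.2
  rw [Finset.sum_congr rfl h, Finset.sum_const, nsmul_eq_mul]

lemma expectation_T2 (hq0 : 0 < q) (hq1 : q ≤ 1) :
    ∫ σ, ((survivingTriangles G σ : ℝ)) ^ 2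
        ∂(edgeRetentionMeasure G (ENNReal.ofReal q) (ENNReal.ofReal_le_one.mpr hq1))
      = ∑ t ∈ triFinset G, ∑ s ∈ triFinset G, q ^ ((Et G t ∪ Et G s).card) := by
  have hmul : ∀ (σ : ↥G.edgeFinset → Bool) t s,
      (if ∀ e ∈ Et G t, σ e = true then (1:ℝ) else 0)
        * (if ∀ e ∈ Et G s, σ e = true then (1:ℝ) else 0)
      = if ∀ e ∈ Et G t ∪ Et G s, σ e = true then (1:ℝ) else 0 := by
    intro σ t s
    by_cases h1 : ∀ e ∈ Et G t, σ e = true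
    · by_cases h2 : ∀ e ∈ Et G s, σ e = true
      · rw [if_pos h1, if_pos h2, if_pos (Finset.forall_mem_union.mpr ⟨h1, h2⟩), one_mul]
      · rw [if_neg h2, mul_zero, if_neg (fun h => h2 (Finset.forall_mem_union.mp h).2)]
    · rw [if_neg h1, zero_mul, if_neg (fun h => h1 (Finset.forall_mem_union.mp h).1)]
  have hrw : ∀ σ : ↥G.edgeFinset → Bool, ((survivingTriangles G σ : ℝ)) ^ 2
      = ∑ t ∈ triFinset G, ∑ s ∈ triFinset G,
          (if ∀ e ∈ Et G t ∪ Et G s, σ e = true then (1:ℝ) else 0) := by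
    intro σ
    rw [sq, surv_sum G, Finset.sum_mul_sum]
    exact Finset.sum_congr rfl fun t _ => Finset.sum_congr rfl fun s _ => hmul σ t s
  simp_rw [hrw]
  rw [integral_finset_sum _ (fun t _ => Integrable.of_finite)]
  refine Finset.sum_congr rfl fun t ht => ?_
  rw [integral_finset_sum _ (fun s _ => Integrable.of_finite)]
  refine Finset.sum_congr rfl fun s hs => ?_
  exact integral_indicator_pow G q hq0.le hq1 _

lemma double_sum_eval (hq0 : 0 < q) :
    ∑ t ∈ triFinset G, ∑ s ∈ triFinset G, q ^ ((Et G t ∪ Et G s).card)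
      = ((triFinset G).card : ℝ) ^ 2 * q ^ 6
        + ((triFinset G).card : ℝ) * (q ^ 3 - q ^ 6)
        + (2 * ((pairFinset G).card : ℝ)) * (q ^ 5 - q ^ 6) := by
  have key : ∀ t ∈ triFinset G, ∀ s ∈ triFinset G,
      q ^ ((Et G t ∪ Et G s).card)
      = q ^ 6 + (if t = s then q ^ 3 - q ^ 6 else 0)
          + (if t ≠ s ∧ (Et G t ∩ Et G s).Nonempty then q ^ 5 - q ^ 6 else 0) := by
    intro t ht s hs
    simp only [triFinset, Finset.mem_filter] at ht hs
    by_cases hts : t = s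
    · subst hts
      rw [Finset.union_self, card_Et G t ht.2]
      simp
    · have hu := card_union_Et G ht.2 hs.2
      by_cases hsh : (Et G t ∩ Et G s).Nonempty
      · have h1 : (Et G t ∩ Et G s).card = 1 :=
          le_antisymm (card_inter_le_one G ht.2 hs.2 hts) (Finset.card_pos.mpr hsh)
        have : (Et G t ∪ Et G s).card = 5 := by omega
        rw [this]; simp [hts, hsh]
      · have h0 : (Et G t ∩ Et G s).card = 0 := by
          rw [Finset.card_eq_zero, ← Finset.not_nonempty_iff_eq_empty]; exact hsh
        have : (Et G t ∪ Et G s).card = 6 := by omega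
        rw [this]; simp [hts, hsh]
  rw [Finset.sum_congr rfl fun t ht => Finset.sum_congr rfl fun s hs => key t ht s hs]
  simp only [Finset.sum_add_distrib]
  congr 1
  · congr 1
    · rw [Finset.sum_const, Finset.sum_const, nsmul_eq_mul, nsmul_eq_mul]; ring
    · have : ∀ t ∈ triFinset G,
          (∑ s ∈ triFinset G, if t = s then q ^ 3 - q ^ 6 else 0) = q ^ 3 - q ^ 6 := by
        intro t ht
        rw [Finset.sum_ite_eq (triFinset G) t (fun _ => q ^ 3 - q ^ 6), if_pos ht]
      rw [Finset.sum_congr rfl this, Finset.sum_const, nsmul_eq_mul]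
  · rw [← Finset.sum_product' (triFinset G) (triFinset G)
      (fun t s => if t ≠ s ∧ (Et G t ∩ Et G s).Nonempty then q ^ 5 - q ^ 6 else 0)]
    have : ∀ p ∈ triFinset G ×ˢ triFinset G,
        (if p.1 ≠ p.2 ∧ (Et G p.1 ∩ Et G p.2).Nonempty then q ^ 5 - q ^ 6 else 0)
        = (q ^ 5 - q ^ 6) * (if p.1 ≠ p.2 ∧ (Et G p.1 ∩ Et G p.2).Nonempty then 1 else 0) := by
      intro p _; by_cases h : p.1 ≠ p.2 ∧ (Et G p.1 ∩ Et G p.2).Nonempty <;> simp [h]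
    rw [Finset.sum_congr rfl this, ← Finset.mul_sum, Finset.sum_boole, ordered_pairs_card G]
    push_cast
    ring

theorem variance_sparsified_triangle_estimator' :
    ∀ (hq0 : 0 < q) (hq1 : q ≤ 1),
    ProbabilityTheory.variance
        (fun σ => (1 / q ^ 3) * (survivingTriangles G σ : ℝ))
        (edgeRetentionMeasure G (ENNReal.ofReal q) (ENNReal.ofReal_le_one.mpr hq1))
      = (1 / q ^ 3 - 1) * ({t : Finset V | G.IsNClique 3 t}.ncard : ℝ)
        + 2 * ({P : Finset (Finset V) | P.card = 2 ∧ (∀ t ∈ P, G.IsNClique 3 t) ∧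
              ∃ t₁ ∈ P, ∃ t₂ ∈ P, t₁ ≠ t₂ ∧ (triEdgeSet t₁ ∩ triEdgeSet t₂).Nonempty}.ncard : ℝ)
          * (1 / q - 1) := by
  intro hq0 hq1
  rw [ProbabilityTheory.variance_eq_sub MemLp.of_discrete]
  have hE1 : ∫ σ, (1 / q ^ 3) * (survivingTriangles G σ : ℝ)
        ∂(edgeRetentionMeasure G (ENNReal.ofReal q) (ENNReal.ofReal_le_one.mpr hq1))
      = (1 / q ^ 3) * (((triFinset G).card : ℝ) * q ^ 3) := by
    rw [integral_const_mul, expectation_T G q hq0 hq1]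
  have hE2 : ∫ σ, ((fun σ => (1 / q ^ 3) * (survivingTriangles G σ : ℝ)) ^ 2) σ
        ∂(edgeRetentionMeasure G (ENNReal.ofReal q) (ENNReal.ofReal_le_one.mpr hq1))
      = (1 / q ^ 3) ^ 2 * (((triFinset G).card : ℝ) ^ 2 * q ^ 6
        + ((triFinset G).card : ℝ) * (q ^ 3 - q ^ 6)
        + (2 * ((pairFinset G).card : ℝ)) * (q ^ 5 - q ^ 6)) := by
    have hpt : ∀ σ : ↥G.edgeFinset → Bool,
        ((fun σ => (1 / q ^ 3) * (survivingTriangles G σ : ℝ)) ^ 2) σ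
        = (1 / q ^ 3) ^ 2 * ((survivingTriangles G σ : ℝ)) ^ 2 := by
      intro σ; simp [mul_pow]
    simp_rw [hpt]
    rw [integral_const_mul, expectation_T2 G q hq0 hq1, double_sum_eval G q hq0]
  rw [hE1, hE2]
  have hT : ({t : Finset V | G.IsNClique 3 t}.ncard : ℝ) = ((triFinset G).card : ℝ) := by
    rw [show {t : Finset V | G.IsNClique 3 t} = ↑(triFinset G) by
      ext t; simp [triFinset], Set.ncard_coe_finset]
  have hK : ({P : Finset (Finset V) | P.card = 2 ∧ (∀ t ∈ P, G.IsNClique 3 t) ∧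
        ∃ t₁ ∈ P, ∃ t₂ ∈ P, t₁ ≠ t₂ ∧ (triEdgeSet t₁ ∩ triEdgeSet t₂).Nonempty}.ncard : ℝ)
      = ((pairFinset G).card : ℝ) := by
    rw [show {P : Finset (Finset V) | P.card = 2 ∧ (∀ t ∈ P, G.IsNClique 3 t) ∧
        ∃ t₁ ∈ P, ∃ t₂ ∈ P, t₁ ≠ t₂ ∧ (triEdgeSet t₁ ∩ triEdgeSet t₂).Nonempty}
        = ↑(pairFinset G) by ext P; simp [pairFinset], Set.ncard_coe_finset]
  rw [hT, hK]
  have hq : q ≠ 0 := hq0.ne'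
  field_simp
  ring

end Aux

/-- Let `G` be a finite simple undirected graph and `0 < q ≤ 1`. Retaining each
edge independently with probability `q`, the variance of the estimator `(1/q³)·T(G')`, where
`T(G')` is the number of surviving triangles, equals
`(1/q³ − 1)·T(G) + 2k·(1/q − 1)`, where `T(G)` is the number of triangles of `G` and `k` is
the number of unordered pairs of distinct triangles of `G` sharing a common edge. -/
theorem variance_sparsified_triangle_estimator {V : Type*} [Fintype V] [DecidableEq V]
    (G : SimpleGraph V) [DecidableRel G.Adj] (q : ℝ) (hq0 : 0 < q) (hq1 : q ≤ 1) :
    ProbabilityTheory.variance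
        (fun σ => (1 / q ^ 3) * (survivingTriangles G σ : ℝ))
        (edgeRetentionMeasure G (ENNReal.ofReal q) (ENNReal.ofReal_le_one.mpr hq1))
      = (1 / q ^ 3 - 1) * ({t : Finset V | G.IsNClique 3 t}.ncard : ℝ)
        + 2 * ({P : Finset (Finset V) | P.card = 2 ∧ (∀ t ∈ P, G.IsNClique 3 t) ∧
              ∃ t₁ ∈ P, ∃ t₂ ∈ P, t₁ ≠ t₂ ∧ (triEdgeSet t₁ ∩ triEdgeSet t₂).Nonempty}.ncard : ℝ)
          * (1 / q - 1) := by
  exact variance_sparsified_triangle_estimator' G q hq0 hq1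
end
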